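/- arXiv:2402.15146 — 8 statements merged into one kernel-verified Lean document; each statement's English description precedes it below -/
import Mathlib

section
/- Let K(u)=k(‖u‖²/2) with k convex non-increasing and k'(0+)>-∞, let G(u)=g(‖u‖²/2) with g(0)=-k'(0+) and -g(v)∈∂k(v) for v>0. Define H(u|u') = (G(u')/2)(‖u'‖² - ‖u‖²) + K(u'). Then H(·|u') is a minorizer of K at u': H(u'|u') = K(u') and H(u|u') ≤ K(u) for all u ∈ ℝ^d. -/
theorem key_subgrad (k : ℝ → ℝ)
    (hconv : ConvexOn ℝ (Set.Ici (0:ℝ)) k)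
    (k0' : ℝ) (hderiv : HasDerivWithinAt k k0' (Set.Ici (0:ℝ)) 0) :
    ∀ v : ℝ, 0 ≤ v → k v - k 0 ≥ k0' * v := by
  intro v hv
  rcases eq_or_lt_of_le hv with h | h
  · simp [← h]
  · have hset : Set.Ici (0:ℝ) \ {0} = Set.Ioi 0 := by
      ext x; simp [Set.mem_diff, Set.mem_Ici, Set.mem_Ioi, lt_iff_le_and_ne, eq_comm]
    have hT : Filter.Tendsto (slope k 0) (nhdsWithin 0 (Set.Ioi 0)) (nhds k0') := by
      have := hasDerivWithinAt_iff_tendsto_slope.mp hderiv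
      rwa [hset] at this
    have hle : k0' ≤ slope k 0 v := by
      refine le_of_tendsto hT ?_
      filter_upwards [Ioo_mem_nhdsGT_of_mem (Set.left_mem_Ico.mpr h)] with t ht
      have := hconv.secant_mono (Set.self_mem_Ici) (le_of_lt ht.1) hv ht.1.ne' h.ne'
        ht.2.le
      simpa [slope_def_field] using this
    rw [slope_def_field, sub_zero] at hle
    have := (le_div_iff₀ h).mp hle
    linarith

theorem stmt_3 {d : ℕ} (k g : ℝ → ℝ)
    (hconv : ConvexOn ℝ (Set.Ici (0:ℝ)) k)
    (hmono : AntitoneOn k (Set.Ici (0:ℝ)))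
    (k0' : ℝ) (hderiv : HasDerivWithinAt k k0' (Set.Ici (0:ℝ)) 0)
    (hg0 : g 0 = -k0')
    (hg : ∀ v : ℝ, 0 < v → ∀ u ∈ Set.Ici (0:ℝ), k u - k v ≥ (-g v) * (u - v))
    (K G : EuclideanSpace ℝ (Fin d) → ℝ)
    (hK : ∀ u, K u = k (‖u‖ ^ 2 / 2)) (hG : ∀ u, G u = g (‖u‖ ^ 2 / 2))
    (H : EuclideanSpace ℝ (Fin d) → EuclideanSpace ℝ (Fin d) → ℝ)
    (hH : ∀ u u', H u u' = G u' / 2 * (‖u'‖ ^ 2 - ‖u‖ ^ 2) + K u') :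
    ∀ u' u : EuclideanSpace ℝ (Fin d), H u' u' = K u' ∧ H u u' ≤ K u := by
  intro u' u
  constructor
  · rw [hH]; ring
  · rw [hH, hK u, hK u', hG u']
    set v : ℝ := ‖u‖ ^ 2 / 2 with hvdef
    set v' : ℝ := ‖u'‖ ^ 2 / 2 with hv'def
    have hv : 0 ≤ v := by positivity
    have hv' : 0 ≤ v' := by positivity
    have h1 : ‖u'‖ ^ 2 - ‖u‖ ^ 2 = 2 * (v' - v) := by rw [hvdef, hv'def]; ring
    rw [h1]
    rcases eq_or_lt_of_le hv' with h | h
    · rw [← h, hg0]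
      have := key_subgrad k hconv k0' hderiv v hv
      nlinarith [this]
    · have := hg v' h v hv
      nlinarith [this]
end

section
/- Diameter contraction for the BMS update: let y_1,…,y_n ∈ ℝ^d, let g:[0,∞)→[0,∞) be non-increasing with g(0)>0, h>0, set G_{ij}=g(‖y_i-y_j‖²/(2h²)), and suppose the diameter d₀ = max_{i,j}‖y_i-y_j‖ satisfies g((d₀/h)²/2) > 0. Define y'_i = (∑_j G_{ij} y_j)/(∑_j G_{ij}). Then the diameter d₁ of {y'_i} satisfies d₁ ≤ (1 - g((d₀/h)²/2)/(4g(0))) · d₀. -/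
open scoped RealInnerProductSpace

theorem stmt_9 {d n : ℕ}
    (g : ℝ → ℝ) (hgnonneg : ∀ u : ℝ, 0 ≤ u → 0 ≤ g u)
    (hgmono : AntitoneOn g (Set.Ici 0)) (hg0 : 0 < g 0)
    (h : ℝ) (hh : 0 < h)
    (y y' : Fin n → EuclideanSpace ℝ (Fin d))
    (d₀ : ℝ) (hd₀ : ∀ i j, ‖y i - y j‖ ≤ d₀) (hd₀' : ∃ i j, ‖y i - y j‖ = d₀)
    (hpos : 0 < g ((d₀ / h) ^ 2 / 2))
    (hupd : ∀ i, y' i = (∑ j, g (‖y i - y j‖ ^ 2 / (2 * h ^ 2)))⁻¹ •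
        ∑ j, g (‖y i - y j‖ ^ 2 / (2 * h ^ 2)) • y j) :
    ∀ i j, ‖y' i - y' j‖ ≤ (1 - g ((d₀ / h) ^ 2 / 2) / (4 * g 0)) * d₀ := by
  obtain ⟨i₀, j₀, hij₀⟩ := hd₀'
  haveI hn : Nonempty (Fin n) := ⟨i₀⟩
  have hnpos : 0 < (n : ℝ) := by exact_mod_cast Fin.pos i₀
  have hd0 : 0 ≤ d₀ := hij₀ ▸ norm_nonneg _
  set gm : ℝ := g ((d₀ / h) ^ 2 / 2) with hgm
  -- weight bounds
  have hargnn : ∀ i k : Fin n, (0:ℝ) ≤ ‖y i - y k‖ ^ 2 / (2 * h ^ 2) := by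
    intro i k; positivity
  have hargub : ∀ i k : Fin n, ‖y i - y k‖ ^ 2 / (2 * h ^ 2) ≤ (d₀ / h) ^ 2 / 2 := by
    intro i k
    have h1 : ‖y i - y k‖ ^ 2 ≤ d₀ ^ 2 :=
      pow_le_pow_left₀ (norm_nonneg _) (hd₀ i k) 2
    have h2 : (d₀ / h) ^ 2 / 2 = d₀ ^ 2 / (2 * h ^ 2) := by
      rw [div_pow, div_div, mul_comm]
    rw [h2]
    exact div_le_div_of_nonneg_right h1 (by positivity) |>.trans_eq rfl
  have hwlb : ∀ i k : Fin n, gm ≤ g (‖y i - y k‖ ^ 2 / (2 * h ^ 2)) := by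
    intro i k
    exact hgmono (Set.mem_Ici.2 (hargnn i k))
      (Set.mem_Ici.2 (by positivity)) (hargub i k)
  have hwub : ∀ i k : Fin n, g (‖y i - y k‖ ^ 2 / (2 * h ^ 2)) ≤ g 0 := by
    intro i k
    exact hgmono (Set.mem_Ici.2 le_rfl) (Set.mem_Ici.2 (hargnn i k)) (hargnn i k)
  have hwnn : ∀ i k : Fin n, 0 ≤ g (‖y i - y k‖ ^ 2 / (2 * h ^ 2)) := by
    intro i k; exact hgnonneg _ (hargnn i k)
  have hSlb : ∀ i : Fin n, (n : ℝ) * gm ≤ ∑ k, g (‖y i - y k‖ ^ 2 / (2 * h ^ 2)) := by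
    intro i
    calc (n : ℝ) * gm = ∑ _k : Fin n, gm := by
          simp [Finset.sum_const, mul_comm]
      _ ≤ _ := Finset.sum_le_sum fun k _ => hwlb i k
  have hSub : ∀ i : Fin n, (∑ k, g (‖y i - y k‖ ^ 2 / (2 * h ^ 2))) ≤ (n : ℝ) * g 0 := by
    intro i
    calc (∑ k, g (‖y i - y k‖ ^ 2 / (2 * h ^ 2))) ≤ ∑ _k : Fin n, g 0 :=
          Finset.sum_le_sum fun k _ => hwub i k
      _ = (n : ℝ) * g 0 := by simp [Finset.sum_const, mul_comm]
  have hSpos : ∀ i : Fin n, 0 < ∑ k, g (‖y i - y k‖ ^ 2 / (2 * h ^ 2)) := by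
    intro i
    exact lt_of_lt_of_le (by positivity) (hSlb i)
  have hgmle : gm ≤ g 0 :=
    hgmono (Set.mem_Ici.2 le_rfl) (Set.mem_Ici.2 (by positivity)) (by positivity)
  have hfac : (0:ℝ) ≤ 1 - gm / (4 * g 0) := by
    have : gm / (4 * g 0) ≤ 1 / 4 := by
      rw [div_le_div_iff₀ (by positivity) (by norm_num)]
      nlinarith
    linarith
  -- key one-sided lemma
  have key : ∀ u : EuclideanSpace ℝ (Fin d), ‖u‖ ≤ 1 →
      ∀ a b : ℝ, (∀ k, a ≤ ⟪u, y k⟫) → (∀ k, ⟪u, y k⟫ ≤ b) → b - a ≤ d₀ →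
      ∀ A : Finset (Fin n), n ≤ 2 * A.card →
      (∀ k ∈ A, ⟪u, y k⟫ ≤ (a + b) / 2) →
      ∀ i j, ⟪u, y' i - y' j⟫ ≤ (1 - gm / (4 * g 0)) * d₀ := by
    intro u hu a b ha hb hba A hA hAm i j
    have hba0 : 0 ≤ b - a := by have := ha i₀; have := hb i₀; linarith
    have hinner : ∀ i : Fin n, ⟪u, y' i⟫ =
        (∑ k, g (‖y i - y k‖ ^ 2 / (2 * h ^ 2)))⁻¹ *
          ∑ k, g (‖y i - y k‖ ^ 2 / (2 * h ^ 2)) * ⟪u, y k⟫ := by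
      intro i
      rw [hupd i, real_inner_smul_right, inner_sum]
      congr 1
      exact Finset.sum_congr rfl fun k _ => real_inner_smul_right _ _ _
    -- lower bound: a ≤ ⟪u, y' j⟫
    have hlow : a ≤ ⟪u, y' j⟫ := by
      rw [hinner j, inv_mul_eq_div, le_div_iff₀ (hSpos j)]
      calc a * ∑ k, g (‖y j - y k‖ ^ 2 / (2 * h ^ 2))
          = ∑ k, g (‖y j - y k‖ ^ 2 / (2 * h ^ 2)) * a := by
            rw [Finset.mul_sum]; exact Finset.sum_congr rfl fun k _ => mul_comm _ _
        _ ≤ _ := Finset.sum_le_sum fun k _ =>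
            mul_le_mul_of_nonneg_left (ha k) (hwnn j k)
    -- upper bound for i
    set S : ℝ := ∑ k, g (‖y i - y k‖ ^ 2 / (2 * h ^ 2)) with hSdef
    set W : ℝ := ∑ k ∈ A, g (‖y i - y k‖ ^ 2 / (2 * h ^ 2)) with hWdef
    have hWS : W + (∑ k ∈ Aᶜ, g (‖y i - y k‖ ^ 2 / (2 * h ^ 2))) = S :=
      Finset.sum_add_sum_compl A _
    have hWlb : (A.card : ℝ) * gm ≤ W := by
      calc (A.card : ℝ) * gm = ∑ _k ∈ A, gm := by simp [Finset.sum_const, mul_comm]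
        _ ≤ W := Finset.sum_le_sum fun k _ => hwlb i k
    have hP : (∑ k, g (‖y i - y k‖ ^ 2 / (2 * h ^ 2)) * ⟪u, y k⟫)
        ≤ S * b - W * (b - a) / 2 := by
      rw [← Finset.sum_add_sum_compl A]
      have h1 : (∑ k ∈ A, g (‖y i - y k‖ ^ 2 / (2 * h ^ 2)) * ⟪u, y k⟫)
          ≤ W * ((a + b) / 2) := by
        rw [hWdef, Finset.sum_mul]
        exact Finset.sum_le_sum fun k hk =>
          mul_le_mul_of_nonneg_left (hAm k hk) (hwnn i k)
      have h2 : (∑ k ∈ Aᶜ, g (‖y i - y k‖ ^ 2 / (2 * h ^ 2)) * ⟪u, y k⟫)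
          ≤ (∑ k ∈ Aᶜ, g (‖y i - y k‖ ^ 2 / (2 * h ^ 2))) * b := by
        rw [Finset.sum_mul]
        exact Finset.sum_le_sum fun k _ =>
          mul_le_mul_of_nonneg_left (hb k) (hwnn i k)
      have h3 : W * ((a + b) / 2) + (∑ k ∈ Aᶜ, g (‖y i - y k‖ ^ 2 / (2 * h ^ 2))) * b
          = S * b - W * (b - a) / 2 := by
        rw [← hWS]; ring
      linarith
    have hc1 : gm / (4 * g 0) * S ≤ W / 2 := by
      rw [div_mul_eq_mul_div, div_le_div_iff₀ (by positivity) (by norm_num : (0:ℝ) < 2)]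
      have hS' : S ≤ (n : ℝ) * g 0 := hSub i
      have hcard : (n : ℝ) ≤ 2 * (A.card : ℝ) := by exact_mod_cast hA
      nlinarith [mul_le_mul_of_nonneg_left hS' (le_of_lt hpos),
        mul_le_mul_of_nonneg_right hcard (mul_nonneg (le_of_lt hpos) (le_of_lt hg0)),
        mul_le_mul_of_nonneg_right hWlb (le_of_lt hg0)]
    have hc2 : gm / (4 * g 0) * (b - a) * S ≤ W * (b - a) / 2 := by
      have := mul_le_mul_of_nonneg_right hc1 hba0
      calc gm / (4 * g 0) * (b - a) * S = gm / (4 * g 0) * S * (b - a) := by ring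
        _ ≤ W / 2 * (b - a) := this
        _ = W * (b - a) / 2 := by ring
    have hhigh : ⟪u, y' i⟫ ≤ b - gm / (4 * g 0) * (b - a) := by
      rw [hinner i, ← hSdef, inv_mul_eq_div, div_le_iff₀ (hSpos i)]
      have : (b - gm / (4 * g 0) * (b - a)) * S = S * b - gm / (4 * g 0) * (b - a) * S := by
        ring
      rw [this]
      linarith
    have hdiff : ⟪u, y' i - y' j⟫ = ⟪u, y' i⟫ - ⟪u, y' j⟫ := inner_sub_right _ _ _
    rw [hdiff]
    have hstep : ⟪u, y' i⟫ - ⟪u, y' j⟫ ≤ (1 - gm / (4 * g 0)) * (b - a) := by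
      have : b - gm / (4 * g 0) * (b - a) - a = (1 - gm / (4 * g 0)) * (b - a) := by ring
      linarith [hlow, hhigh, this.ge, this.le]
    calc ⟪u, y' i⟫ - ⟪u, y' j⟫ ≤ (1 - gm / (4 * g 0)) * (b - a) := hstep
      _ ≤ (1 - gm / (4 * g 0)) * d₀ := mul_le_mul_of_nonneg_left hba hfac
  -- main argument
  intro i j
  by_cases hne : y' i = y' j
  · rw [hne]; simp
    positivity
  · set v : EuclideanSpace ℝ (Fin d) := y' i - y' j with hv
    have hv0 : v ≠ 0 := sub_ne_zero.2 hne
    have hvn : 0 < ‖v‖ := norm_pos_iff.2 hv0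
    set u : EuclideanSpace ℝ (Fin d) := ‖v‖⁻¹ • v with hudef
    have hun : ‖u‖ ≤ 1 := by
      rw [hudef, norm_smul, norm_inv, norm_norm, inv_mul_cancel₀ (ne_of_gt hvn)]
    have hvu : ⟪u, v⟫ = ‖v‖ := by
      rw [hudef, real_inner_smul_left, real_inner_self_eq_norm_sq]
      field_simp
    set t : Fin n → ℝ := fun k => ⟪u, y k⟫ with ht
    set a : ℝ := Finset.univ.inf' Finset.univ_nonempty t with hadef
    set b : ℝ := Finset.univ.sup' Finset.univ_nonempty t with hbdef
    have ha : ∀ k, a ≤ t k := fun k => Finset.inf'_le _ (Finset.mem_univ k)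
    have hb : ∀ k, t k ≤ b := fun k => Finset.le_sup' _ (Finset.mem_univ k)
    have hba : b - a ≤ d₀ := by
      obtain ⟨p, _, hp⟩ := Finset.exists_mem_eq_sup' Finset.univ_nonempty t
      obtain ⟨q, _, hq⟩ := Finset.exists_mem_eq_inf' Finset.univ_nonempty t
      have : b - a = ⟪u, y p - y q⟫ := by
        rw [hbdef, hadef, hp, hq, inner_sub_right]
      rw [this]
      calc ⟪u, y p - y q⟫ ≤ ‖u‖ * ‖y p - y q‖ := real_inner_le_norm _ _
        _ ≤ 1 * d₀ := mul_le_mul hun (hd₀ p q) (norm_nonneg _) zero_le_one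
        _ = d₀ := one_mul _
    set A : Finset (Fin n) := Finset.univ.filter (fun k => t k ≤ (a + b) / 2) with hAdef
    by_cases hcard : n ≤ 2 * A.card
    · have := key u hun a b ha hb hba A hcard
        (fun k hk => (Finset.mem_filter.1 hk).2) i j
      rw [← hv, hvu] at this
      exact this
    · have hucn : ‖-u‖ ≤ 1 := by rwa [norm_neg]
      have ha' : ∀ k, -b ≤ ⟪-u, y k⟫ := by
        intro k; rw [inner_neg_left]; have := hb k; rw [ht] at this; linarith
      have hb' : ∀ k, ⟪-u, y k⟫ ≤ -a := by
        intro k; rw [inner_neg_left]; have := ha k; rw [ht] at this; linarith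
      have hba' : -a - -b ≤ d₀ := by linarith
      have hAc : n ≤ 2 * Aᶜ.card := by
        have h1 : Aᶜ.card = n - A.card := by
          rw [Finset.card_compl, Fintype.card_fin]
        have h2 : A.card ≤ n := by
          simpa using Finset.card_le_card (Finset.subset_univ A)
        omega
      have hAcm : ∀ k ∈ Aᶜ, ⟪-u, y k⟫ ≤ (-b + -a) / 2 := by
        intro k hk
        rw [Finset.mem_compl, hAdef, Finset.mem_filter] at hk
        push_neg at hk
        have := hk (Finset.mem_univ k)
        rw [inner_neg_left]
        linarith
      have := key (-u) hucn (-b) (-a) ha' hb' hba' Aᶜ hAc hAcm j i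
      have heq : ⟪-u, y' j - y' i⟫ = ⟪u, y' i - y' j⟫ := by
        rw [inner_neg_left, inner_sub_right, inner_sub_right]; ring
      rw [heq, ← hv, hvu] at this
      exact this
end

section
/- Ascent inequality for the BMS update in a quadratic form: let G ∈ ℝ^{n×n} symmetric with G_{ij} ≥ 0, G_{ii} ≥ g₀ > 0, S = diag of row sums, and define for configurations y, y' ∈ (ℝ^d)^n the quadratic Q(u) = ∑_{i,j} (G_{ij}/2)‖u_i − u_j‖². If y' is given componentwise by y'_i = (∑_j G_{ij} y_j)/(∑_j G_{ij}), then Q(y) − Q(y') ≥ 2 g₀ ‖y' − y‖², where ‖·‖ is the Euclidean norm on (ℝ^d)^n. -/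
open RealInnerProductSpace

theorem stmt_12 {d n : ℕ} (g₀ : ℝ) (hg₀ : 0 < g₀) (G : Fin n → Fin n → ℝ)
    (hsymm : ∀ i j, G i j = G j i) (hnonneg : ∀ i j, 0 ≤ G i j)
    (hdiag : ∀ i, g₀ ≤ G i i)
    (y y' : Fin n → EuclideanSpace ℝ (Fin d))
    (hupd : ∀ i, y' i = (∑ j, G i j)⁻¹ • ∑ j, G i j • y j)
    (Q : (Fin n → EuclideanSpace ℝ (Fin d)) → ℝ)
    (hQ : ∀ u, Q u = ∑ i, ∑ j, G i j / 2 * ‖u i - u j‖ ^ 2) :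
    2 * g₀ * ∑ i, ‖y' i - y i‖ ^ 2 ≤ Q y - Q y' := by
  classical
  set e : Fin n → EuclideanSpace ℝ (Fin d) := fun i => y' i - y i with he
  set s : Fin n → ℝ := fun i => ∑ j, G i j with hsdef
  have hs_ge : ∀ i, g₀ ≤ s i := by
    intro i
    calc g₀ ≤ G i i := hdiag i
      _ ≤ s i := Finset.single_le_sum (fun j _ => hnonneg i j) (Finset.mem_univ i)
  have hs_pos : ∀ i, 0 < s i := fun i => lt_of_lt_of_le hg₀ (hs_ge i)
  have hkey : ∀ i, (∑ j, G i j • y j) = s i • y' i := by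
    intro i
    rw [hupd i, smul_inv_smul₀ (ne_of_gt (hs_pos i))]
  -- B-form reduction: ∑∑ G i j ⟪v i, y j⟫ = ∑ s i ⟪v i, y' i⟫
  have hB : ∀ v : Fin n → EuclideanSpace ℝ (Fin d),
      (∑ i, ∑ j, G i j * ⟪v i, y j⟫) = ∑ i, s i * ⟪v i, y' i⟫ := by
    intro v
    refine Finset.sum_congr rfl fun i _ => ?_
    calc ∑ j, G i j * ⟪v i, y j⟫ = ∑ j, ⟪v i, G i j • y j⟫ :=
          Finset.sum_congr rfl fun j _ => (real_inner_smul_right _ _ _).symm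
      _ = ⟪v i, ∑ j, G i j • y j⟫ := (inner_sum _ _ _).symm
      _ = ⟪v i, s i • y' i⟫ := by rw [hkey]
      _ = s i * ⟪v i, y' i⟫ := real_inner_smul_right _ _ _
  -- expansion of Q
  have hQexp : ∀ u : Fin n → EuclideanSpace ℝ (Fin d),
      Q u = (∑ i, s i * ‖u i‖ ^ 2) - ∑ i, ∑ j, G i j * ⟪u i, u j⟫ := by
    intro u
    have h0 : Q u = ∑ i, ∑ j,
        (G i j / 2 * ‖u i‖ ^ 2 + G i j / 2 * ‖u j‖ ^ 2 - G i j * ⟪u i, u j⟫) := by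
      rw [hQ]
      refine Finset.sum_congr rfl fun i _ => Finset.sum_congr rfl fun j _ => ?_
      rw [norm_sub_sq_real]; ring
    have h2 : (∑ i, ∑ j, G i j / 2 * ‖u j‖ ^ 2) = ∑ i, ∑ j, G i j / 2 * ‖u i‖ ^ 2 := by
      rw [Finset.sum_comm]
      exact Finset.sum_congr rfl fun i _ => Finset.sum_congr rfl fun j _ => by rw [hsymm]
    have h1 : ∀ i, (∑ j, G i j / 2 * ‖u i‖ ^ 2) = s i / 2 * ‖u i‖ ^ 2 := by
      intro i
      rw [← Finset.sum_mul, ← Finset.sum_div]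
    rw [h0]
    simp only [Finset.sum_add_distrib, Finset.sum_sub_distrib, h2, h1]
    rw [← Finset.sum_add_distrib]
    congr 1
    refine Finset.sum_congr rfl fun i _ => ?_
    ring
  have hy' : ∀ k, y' k = y k + e k := fun k => by simp [he]
  -- E4 : B y' y' = B y y + B e e + 2 * S4
  have E4 : (∑ i, ∑ j, G i j * ⟪y' i, y' j⟫)
      = (∑ i, ∑ j, G i j * ⟪y i, y j⟫) + (∑ i, ∑ j, G i j * ⟪e i, e j⟫)
        + 2 * ∑ i, s i * ⟪e i, y' i⟫ := by
    have hsplit : (∑ i, ∑ j, G i j * ⟪y' i, y' j⟫)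
        = (∑ i, ∑ j, G i j * ⟪y i, y j⟫) + (∑ i, ∑ j, G i j * ⟪y i, e j⟫)
          + (∑ i, ∑ j, G i j * ⟪e i, y j⟫) + (∑ i, ∑ j, G i j * ⟪e i, e j⟫) := by
      simp only [← Finset.sum_add_distrib]
      refine Finset.sum_congr rfl fun i _ => Finset.sum_congr rfl fun j _ => ?_
      rw [hy' i, hy' j, inner_add_left, inner_add_right, inner_add_right]
      ring
    have hye : (∑ i, ∑ j, G i j * ⟪y i, e j⟫) = ∑ i, ∑ j, G i j * ⟪e i, y j⟫ := by
      rw [Finset.sum_comm]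
      refine Finset.sum_congr rfl fun i _ => Finset.sum_congr rfl fun j _ => ?_
      rw [hsymm, real_inner_comm]
    rw [hsplit, hye, hB e]
    ring
  -- E5 : S1 = S2 - 2*S4 + S3
  have E5 : (∑ i, s i * ‖y i‖ ^ 2)
      = (∑ i, s i * ‖y' i‖ ^ 2) - 2 * (∑ i, s i * ⟪e i, y' i⟫)
        + ∑ i, s i * ‖e i‖ ^ 2 := by
    have : ∀ i, s i * ‖y i‖ ^ 2
        = s i * ‖y' i‖ ^ 2 - 2 * (s i * ⟪e i, y' i⟫) + s i * ‖e i‖ ^ 2 := by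
      intro i
      have hyi : y i = y' i - e i := by simp [he]
      rw [hyi, norm_sub_sq_real, real_inner_comm (e i) (y' i)]
      ring
    simp only [this, Finset.sum_add_distrib, Finset.sum_sub_distrib, ← Finset.mul_sum]
  -- bound on Q e
  have E6 : Q e ≤ (∑ i, s i * ‖e i‖ ^ 2) + (∑ i, s i * ‖e i‖ ^ 2)
      - 2 * ∑ i, G i i * ‖e i‖ ^ 2 := by
    have hterm : ∀ i j, G i j / 2 * ‖e i - e j‖ ^ 2
        ≤ G i j * ‖e i‖ ^ 2 + G i j * ‖e j‖ ^ 2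
          - (if i = j then 2 * G i i * ‖e i‖ ^ 2 else 0) := by
      intro i j
      by_cases hij : i = j
      · subst hij
        simp
        nlinarith [sq_nonneg ‖e i‖]
      · simp only [hij, if_false, sub_zero]
        have h1 : ‖e i - e j‖ ≤ ‖e i‖ + ‖e j‖ := norm_sub_le _ _
        have h2 : ‖e i - e j‖ ^ 2 ≤ 2 * ‖e i‖ ^ 2 + 2 * ‖e j‖ ^ 2 := by
          nlinarith [norm_nonneg (e i - e j), norm_nonneg (e i), norm_nonneg (e j),
            sq_nonneg (‖e i‖ - ‖e j‖)]
        nlinarith [hnonneg i j, mul_le_mul_of_nonneg_left h2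
          (div_nonneg (hnonneg i j) (by norm_num : (0:ℝ) ≤ 2))]
    calc Q e ≤ ∑ i, ∑ j, (G i j * ‖e i‖ ^ 2 + G i j * ‖e j‖ ^ 2
          - (if i = j then 2 * G i i * ‖e i‖ ^ 2 else 0)) := by
          rw [hQ]
          exact Finset.sum_le_sum fun i _ => Finset.sum_le_sum fun j _ => hterm i j
      _ = (∑ i, s i * ‖e i‖ ^ 2) + (∑ i, s i * ‖e i‖ ^ 2)
          - 2 * ∑ i, G i i * ‖e i‖ ^ 2 := by
          simp only [Finset.sum_add_distrib, Finset.sum_sub_distrib]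
          have hA : (∑ i, ∑ j, G i j * ‖e i‖ ^ 2) = ∑ i, s i * ‖e i‖ ^ 2 := by
            refine Finset.sum_congr rfl fun i _ => ?_
            rw [← Finset.sum_mul]
          have hBB : (∑ i, ∑ j, G i j * ‖e j‖ ^ 2) = ∑ i, s i * ‖e i‖ ^ 2 := by
            rw [Finset.sum_comm]
            refine Finset.sum_congr rfl fun i _ => ?_
            rw [← Finset.sum_mul]
            congr 1
            exact Finset.sum_congr rfl fun j _ => hsymm j i
          have hC : (∑ i, ∑ j, (if i = j then 2 * G i i * ‖e i‖ ^ 2 else 0))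
              = 2 * ∑ i, G i i * ‖e i‖ ^ 2 := by
            rw [Finset.mul_sum]
            refine Finset.sum_congr rfl fun i _ => ?_
            simp [Finset.sum_ite_eq, mul_assoc]
          rw [hA, hBB, hC]
  -- diagonal lower bound
  have E7 : (∑ i, g₀ * ‖e i‖ ^ 2) ≤ ∑ i, G i i * ‖e i‖ ^ 2 :=
    Finset.sum_le_sum fun i _ =>
      mul_le_mul_of_nonneg_right (hdiag i) (sq_nonneg _)
  have hgoalsum : (∑ i, ‖y' i - y i‖ ^ 2) = ∑ i, ‖e i‖ ^ 2 := rfl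
  have hfac : (∑ i, g₀ * ‖e i‖ ^ 2) = g₀ * ∑ i, ‖e i‖ ^ 2 := by
    rw [Finset.mul_sum]
  have EQy := hQexp y
  have EQy' := hQexp y'
  have EQe := hQexp e
  rw [hgoalsum]
  linarith [EQy, EQy', EQe, E4, E5, E6, E7, hfac]
end

section
/- Objective ascent for BMS: under the kernel assumptions (k convex, non-increasing, k'(0+)>-∞, K(u)=k(‖u‖²/2) bounded), the BMS iteration y_{t+1,i} = (∑_j g(‖y_{t,i}−y_{t,j}‖²/(2h²)) y_{t,j})/(∑_j g(‖y_{t,i}−y_{t,j}‖²/(2h²))) satisfies L(y_{t+1}) − L(y_t) ≥ (2g(0)/h²)‖y_{t+1} − y_t‖², where L(u)=∑_{i,j}K((u_i−u_j)/h). Consequently (L(y_t))_t is non-decreasing and converges, and L(y_{t+1})=L(y_t) implies y_{t+1}=y_t. -/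
open Filter RealInnerProductSpace

-- subgradient at 0 from convexity + right derivative
lemma aux_subgrad0 (k : ℝ → ℝ) (hconv : ConvexOn ℝ (Set.Ici (0:ℝ)) k) (k0' : ℝ)
    (hderiv : HasDerivWithinAt k k0' (Set.Ici (0:ℝ)) 0) :
    ∀ u ∈ Set.Ici (0:ℝ), k0' * u ≤ k u - k 0 := by
  intro u hu
  rcases eq_or_lt_of_le (Set.mem_Ici.mp hu : (0:ℝ) ≤ u) with rfl | hu'
  · simp
  · have hslope : Tendsto (slope k 0) (nhdsWithin 0 (Set.Ioi 0)) (nhds k0') := by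
      have := hasDerivWithinAt_iff_tendsto_slope.mp hderiv
      rwa [Set.Ici_sdiff_left] at this
    have key : k0' ≤ slope k 0 u := by
      refine le_of_tendsto hslope ?_
      filter_upwards [Ioo_mem_nhdsGT_of_mem (Set.mem_Ico.mpr ⟨le_refl 0, hu'⟩)] with x hx
      rw [slope_def_field, slope_def_field]
      exact hconv.secant_mono (Set.self_mem_Ici) (Set.mem_Ici.mpr hx.1.le)
        (Set.mem_Ici.mpr hu'.le) hx.1.ne' hu'.ne' hx.2.le
    rw [slope_def_field, sub_zero] at key
    exact (le_div_iff₀ hu').mp key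

lemma aux_gnonneg (k g : ℝ → ℝ) (M : ℝ) (hM : ∀ u ∈ Set.Ici (0:ℝ), |k u| ≤ M)
    (hg : ∀ v : ℝ, 0 < v → ∀ u ∈ Set.Ici (0:ℝ), k u - k v ≥ (-g v) * (u - v))
    (hg0pos : 0 < g 0) :
    ∀ v ∈ Set.Ici (0:ℝ), 0 ≤ g v := by
  intro v hv
  rcases eq_or_lt_of_le (Set.mem_Ici.mp hv : (0:ℝ) ≤ v) with rfl | hv'
  · exact hg0pos.le
  · by_contra hneg
    push_neg at hneg
    have hc : 0 < -g v := by linarith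
    have hM0 : 0 ≤ M := le_trans (abs_nonneg _) (hM 0 Set.self_mem_Ici)
    set u : ℝ := v + (2*M+1) / (-g v) with hu
    have hupos : 0 < u := by positivity
    have h1 := hg v hv' u (Set.mem_Ici.mpr hupos.le)
    have h2 : (-g v) * (u - v) = 2*M+1 := by
      have hgne : g v ≠ 0 := hneg.ne
      rw [hu]
      field_simp
      ring
    have h3 : |k u| ≤ M := hM u (Set.mem_Ici.mpr hupos.le)
    have h4 : |k v| ≤ M := hM v (Set.mem_Ici.mpr hv'.le)
    rw [h2] at h1
    rw [abs_le] at h3 h4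
    linarith
theorem stmt_13 {d n : ℕ} (k g : ℝ → ℝ)
    (hconv : ConvexOn ℝ (Set.Ici (0:ℝ)) k)
    (hmono : AntitoneOn k (Set.Ici (0:ℝ)))
    (hbdd : ∃ M, ∀ u ∈ Set.Ici (0:ℝ), |k u| ≤ M)
    (k0' : ℝ) (hderiv : HasDerivWithinAt k k0' (Set.Ici (0:ℝ)) 0)
    (hg0 : g 0 = -k0') (hg0pos : 0 < g 0)
    (hg : ∀ v : ℝ, 0 < v → ∀ u ∈ Set.Ici (0:ℝ), k u - k v ≥ (-g v) * (u - v))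
    (h : ℝ) (hh : 0 < h)
    (L : (Fin n → EuclideanSpace ℝ (Fin d)) → ℝ)
    (hL : ∀ u, L u = ∑ i, ∑ j, k (‖u i - u j‖ ^ 2 / (2 * h ^ 2)))
    (y : ℕ → Fin n → EuclideanSpace ℝ (Fin d))
    (hupd : ∀ t i, y (t + 1) i
      = (∑ j, g (‖y t i - y t j‖ ^ 2 / (2 * h ^ 2)))⁻¹ •
          ∑ j, g (‖y t i - y t j‖ ^ 2 / (2 * h ^ 2)) • y t j) :
    (∀ t, 2 * g 0 / h ^ 2 * ∑ i, ‖y (t + 1) i - y t i‖ ^ 2 ≤ L (y (t + 1)) - L (y t)) ∧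
      Monotone (fun t => L (y t)) ∧
      (∃ l, Tendsto (fun t => L (y t)) atTop (nhds l)) ∧
      (∀ t, L (y (t + 1)) = L (y t) → y (t + 1) = y t) := by
  obtain ⟨M, hM⟩ := hbdd
  have hgnn : ∀ v ∈ Set.Ici (0:ℝ), 0 ≤ g v := aux_gnonneg k g M hM hg hg0pos
  have h2 : (0:ℝ) < 2 * h ^ 2 := by positivity
  -- combined subgradient inequality
  have hsub : ∀ a ∈ Set.Ici (0:ℝ), ∀ b ∈ Set.Ici (0:ℝ),
      (-g b) * (a - b) ≤ k a - k b := by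
    intro a ha b hb
    rcases eq_or_lt_of_le (Set.mem_Ici.mp hb : (0:ℝ) ≤ b) with rfl | hb'
    · have := aux_subgrad0 k hconv k0' hderiv a ha
      rw [hg0]; rw [sub_zero]; linarith
    · exact hg b hb' a ha
  -- the main one-step inequality
  have step : ∀ t, 2 * g 0 / h ^ 2 * ∑ i, ‖y (t + 1) i - y t i‖ ^ 2
      ≤ L (y (t + 1)) - L (y t) := by
    intro t
    set x : Fin n → EuclideanSpace ℝ (Fin d) := y t with hxdef
    set x' : Fin n → EuclideanSpace ℝ (Fin d) := y (t + 1) with hxdef'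
    set w : Fin n → Fin n → ℝ := fun i j => g (‖x i - x j‖ ^ 2 / (2 * h ^ 2)) with hwdef
    set u : Fin n → EuclideanSpace ℝ (Fin d) := fun i => x' i - x i with hudef
    have hbmem : ∀ i j, ‖x i - x j‖ ^ 2 / (2 * h ^ 2) ∈ Set.Ici (0:ℝ) := by
      intro i j; rw [Set.mem_Ici]; positivity
    have hwnn : ∀ i j, 0 ≤ w i j := fun i j => hgnn _ (hbmem i j)
    have hwsymm : ∀ i j, w i j = w j i := by
      intro i j; simp only [hwdef, norm_sub_rev]
    have hwdiag : ∀ i, w i i = g 0 := by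
      intro i; simp [hwdef]
    have hSpos : ∀ i, 0 < ∑ j, w i j := by
      intro i
      have h1 : w i i ≤ ∑ j, w i j :=
        Finset.single_le_sum (fun j _ => hwnn i j) (Finset.mem_univ i)
      rw [hwdiag i] at h1
      linarith
    have hfix : ∀ i, (∑ j, w i j) • x' i = ∑ j, w i j • x j := by
      intro i
      rw [hxdef', hupd t i]
      exact smul_inv_smul₀ (hSpos i).ne' _
    have hkey : ∀ i, ∑ j, w i j • (x i - x j) = (∑ j, w i j) • (x i - x' i) := by
      intro i
      calc ∑ j, w i j • (x i - x j)
          = ∑ j, (w i j • x i - w i j • x j) := by simp [smul_sub]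
        _ = (∑ j, w i j) • x i - ∑ j, w i j • x j := by
            rw [Finset.sum_sub_distrib, Finset.sum_smul]
        _ = (∑ j, w i j) • x i - (∑ j, w i j) • x' i := by rw [hfix i]
        _ = _ := (smul_sub _ _ _).symm
    have hP : ∀ i, ∑ j, w i j * ⟪x i - x j, u i⟫ = -((∑ j, w i j) * ‖u i‖ ^ 2) := by
      intro i
      calc ∑ j, w i j * ⟪x i - x j, u i⟫
          = ⟪∑ j, w i j • (x i - x j), u i⟫ := by
            rw [sum_inner]
            exact Finset.sum_congr rfl fun j _ => (real_inner_smul_left _ _ _).symm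
        _ = ⟪(∑ j, w i j) • (x i - x' i), u i⟫ := by rw [hkey i]
        _ = (∑ j, w i j) * ⟪x i - x' i, u i⟫ := real_inner_smul_left _ _ _
        _ = (∑ j, w i j) * ⟪-u i, u i⟫ := by rw [hudef]; rw [neg_sub]
        _ = -((∑ j, w i j) * ‖u i‖ ^ 2) := by
            rw [inner_neg_left, real_inner_self_eq_norm_sq]; ring
    have hA1 : ∑ i, ∑ j, w i j * ⟪x i - x j, u i⟫
        = -(∑ i, (∑ j, w i j) * ‖u i‖ ^ 2) := by
      rw [← Finset.sum_neg_distrib]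
      exact Finset.sum_congr rfl fun i _ => hP i
    have hA2 : ∑ i, ∑ j, w i j * ⟪x i - x j, u j⟫
        = -(∑ i, ∑ j, w i j * ⟪x i - x j, u i⟫) := by
      rw [Finset.sum_comm, ← Finset.sum_neg_distrib]
      refine Finset.sum_congr rfl fun i _ => ?_
      rw [← Finset.sum_neg_distrib]
      refine Finset.sum_congr rfl fun j _ => ?_
      rw [hwsymm j i]
      have : x j - x i = -(x i - x j) := (neg_sub _ _).symm
      rw [this, inner_neg_left]
      ring
    have hBswap : ∑ i, ∑ j, w i j * ‖u j‖ ^ 2 = ∑ i, ∑ j, w i j * ‖u i‖ ^ 2 := by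
      rw [Finset.sum_comm]
      exact Finset.sum_congr rfl fun i _ => Finset.sum_congr rfl fun j _ => by
        rw [hwsymm j i]
    have hB : ∑ i, ∑ j, w i j * ‖u i - u j‖ ^ 2
        ≤ 4 * ∑ i, (∑ j, w i j) * ‖u i‖ ^ 2 - 4 * g 0 * ∑ i, ‖u i‖ ^ 2 := by
      have hterm : ∀ i j, w i j * ‖u i - u j‖ ^ 2
          ≤ 2 * w i j * (‖u i‖ ^ 2 + ‖u j‖ ^ 2)
            - (if i = j then 4 * g 0 * ‖u i‖ ^ 2 else 0) := by
        intro i j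
        by_cases hij : i = j
        · subst hij
          simp [hwdiag i]
          ring_nf
          try linarith
        · simp only [hij, if_false, sub_zero]
          have h1 : ‖u i - u j‖ ≤ ‖u i‖ + ‖u j‖ := norm_sub_le _ _
          have h2 : ‖u i - u j‖ ^ 2 ≤ 2 * (‖u i‖ ^ 2 + ‖u j‖ ^ 2) := by
            nlinarith [mul_self_le_mul_self (norm_nonneg (u i - u j)) h1,
              sq_nonneg (‖u i‖ - ‖u j‖), norm_nonneg (u i - u j)]
          calc w i j * ‖u i - u j‖ ^ 2 ≤ w i j * (2 * (‖u i‖ ^ 2 + ‖u j‖ ^ 2)) :=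
                mul_le_mul_of_nonneg_left h2 (hwnn i j)
            _ = 2 * w i j * (‖u i‖ ^ 2 + ‖u j‖ ^ 2) := by ring
      calc ∑ i, ∑ j, w i j * ‖u i - u j‖ ^ 2
          ≤ ∑ i, ∑ j, (2 * w i j * (‖u i‖ ^ 2 + ‖u j‖ ^ 2)
              - (if i = j then 4 * g 0 * ‖u i‖ ^ 2 else 0)) :=
            Finset.sum_le_sum fun i _ => Finset.sum_le_sum fun j _ => hterm i j
        _ = 4 * ∑ i, (∑ j, w i j) * ‖u i‖ ^ 2 - 4 * g 0 * ∑ i, ‖u i‖ ^ 2 := by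
            have e1 : ∀ i : Fin n,
                (∑ j, if i = j then 4 * g 0 * ‖u i‖ ^ 2 else 0) = 4 * g 0 * ‖u i‖ ^ 2 := by
              intro i; simp
            simp only [Finset.sum_sub_distrib]
            rw [Finset.sum_congr rfl fun i _ => e1 i]
            have e2 : ∀ i : Fin n, ∑ j, 2 * w i j * (‖u i‖ ^ 2 + ‖u j‖ ^ 2)
                = 2 * ((∑ j, w i j) * ‖u i‖ ^ 2) + 2 * ∑ j, w i j * ‖u j‖ ^ 2 := by
              intro i
              have e2a : ∀ j : Fin n, 2 * w i j * (‖u i‖ ^ 2 + ‖u j‖ ^ 2)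
                  = 2 * (w i j * ‖u i‖ ^ 2) + 2 * (w i j * ‖u j‖ ^ 2) := fun j => by ring
              rw [Finset.sum_congr rfl fun j _ => e2a j, Finset.sum_add_distrib,
                ← Finset.mul_sum, ← Finset.mul_sum, ← Finset.sum_mul]
            rw [Finset.sum_congr rfl fun i _ => e2 i, Finset.sum_add_distrib,
              ← Finset.mul_sum, ← Finset.mul_sum, hBswap]
            have e3 : ∀ i : Fin n, ∑ j, w i j * ‖u i‖ ^ 2 = (∑ j, w i j) * ‖u i‖ ^ 2 :=
              fun i => (Finset.sum_mul _ _ _).symm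
            rw [Finset.sum_congr rfl fun i _ => e3 i]
            have e4 : ∑ i, 4 * g 0 * ‖u i‖ ^ 2 = 4 * g 0 * ∑ i, ‖u i‖ ^ 2 := by
              rw [Finset.mul_sum]
            rw [e4]
            ring
    -- expansion of squared norms
    have hexp : ∀ i j : Fin n, ‖x i - x j‖ ^ 2 - ‖x' i - x' j‖ ^ 2
        = -2 * ⟪x i - x j, u i⟫ + 2 * ⟪x i - x j, u j⟫ - ‖u i - u j‖ ^ 2 := by
      intro i j
      have hxx : x' i - x' j = (x i - x j) + (u i - u j) := by
        show x' i - x' j = (x i - x j) + ((x' i - x i) - (x' j - x j))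
        abel
      rw [hxx, norm_add_sq_real, inner_sub_right]
      ring
    have hT : 4 * g 0 * ∑ i, ‖u i‖ ^ 2
        ≤ ∑ i, ∑ j, w i j * (‖x i - x j‖ ^ 2 - ‖x' i - x' j‖ ^ 2) := by
      have expand : ∑ i, ∑ j, w i j * (‖x i - x j‖ ^ 2 - ‖x' i - x' j‖ ^ 2)
          = -2 * (∑ i, ∑ j, w i j * ⟪x i - x j, u i⟫)
            + 2 * (∑ i, ∑ j, w i j * ⟪x i - x j, u j⟫)
            - ∑ i, ∑ j, w i j * ‖u i - u j‖ ^ 2 := by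
        have e : ∀ i j : Fin n, w i j * (‖x i - x j‖ ^ 2 - ‖x' i - x' j‖ ^ 2)
            = -2 * (w i j * ⟪x i - x j, u i⟫) + 2 * (w i j * ⟪x i - x j, u j⟫)
              - w i j * ‖u i - u j‖ ^ 2 := by
          intro i j; rw [hexp i j]; ring
        rw [Finset.sum_congr rfl fun i _ => Finset.sum_congr rfl fun j _ => e i j]
        simp only [Finset.sum_add_distrib, Finset.sum_sub_distrib, ← Finset.mul_sum]
      rw [expand, hA2, hA1]
      linarith [hB]
    -- pass through the kernel inequality
    have hstep2 : ∑ i, ∑ j, (w i j * (‖x i - x j‖ ^ 2 - ‖x' i - x' j‖ ^ 2)) / (2 * h ^ 2)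
        ≤ L x' - L x := by
      rw [hL x', hL x, ← Finset.sum_sub_distrib]
      refine Finset.sum_le_sum fun i _ => ?_
      rw [← Finset.sum_sub_distrib]
      refine Finset.sum_le_sum fun j _ => ?_
      have hamem : ‖x' i - x' j‖ ^ 2 / (2 * h ^ 2) ∈ Set.Ici (0:ℝ) := by
        rw [Set.mem_Ici]; positivity
      have hs := hsub (‖x' i - x' j‖ ^ 2 / (2 * h ^ 2)) hamem
        (‖x i - x j‖ ^ 2 / (2 * h ^ 2)) (hbmem i j)
      have e : (-g (‖x i - x j‖ ^ 2 / (2 * h ^ 2)))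
            * (‖x' i - x' j‖ ^ 2 / (2 * h ^ 2) - ‖x i - x j‖ ^ 2 / (2 * h ^ 2))
          = (w i j * (‖x i - x j‖ ^ 2 - ‖x' i - x' j‖ ^ 2)) / (2 * h ^ 2) := by
        show (-g (‖x i - x j‖ ^ 2 / (2 * h ^ 2)))
            * (‖x' i - x' j‖ ^ 2 / (2 * h ^ 2) - ‖x i - x j‖ ^ 2 / (2 * h ^ 2))
          = (g (‖x i - x j‖ ^ 2 / (2 * h ^ 2)) * (‖x i - x j‖ ^ 2 - ‖x' i - x' j‖ ^ 2))
              / (2 * h ^ 2)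
        field_simp
        ring
      rw [e] at hs
      exact hs
    have hdiv : ∑ i, ∑ j, (w i j * (‖x i - x j‖ ^ 2 - ‖x' i - x' j‖ ^ 2)) / (2 * h ^ 2)
        = (∑ i, ∑ j, w i j * (‖x i - x j‖ ^ 2 - ‖x' i - x' j‖ ^ 2)) / (2 * h ^ 2) := by
      rw [Finset.sum_div]
      exact Finset.sum_congr rfl fun i _ => (Finset.sum_div _ _ _).symm
    show 2 * g 0 / h ^ 2 * ∑ i, ‖u i‖ ^ 2 ≤ L x' - L x
    calc 2 * g 0 / h ^ 2 * ∑ i, ‖u i‖ ^ 2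
        = (4 * g 0 * ∑ i, ‖u i‖ ^ 2) / (2 * h ^ 2) := by
          field_simp
          ring
      _ ≤ (∑ i, ∑ j, w i j * (‖x i - x j‖ ^ 2 - ‖x' i - x' j‖ ^ 2)) / (2 * h ^ 2) :=
          div_le_div_of_nonneg_right hT h2.le
      _ = ∑ i, ∑ j, (w i j * (‖x i - x j‖ ^ 2 - ‖x' i - x' j‖ ^ 2)) / (2 * h ^ 2) :=
          hdiv.symm
      _ ≤ L x' - L x := hstep2
  -- monotonicity
  have hmonoL : Monotone fun t => L (y t) := by
    apply monotone_nat_of_le_succ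
    intro t
    have h1 := step t
    have h2' : 0 ≤ 2 * g 0 / h ^ 2 * ∑ i, ‖y (t + 1) i - y t i‖ ^ 2 :=
      mul_nonneg (by positivity) (Finset.sum_nonneg fun i _ => sq_nonneg _)
    show L (y t) ≤ L (y (t + 1))
    linarith
  have hbound : ∀ t, L (y t) ≤ (n : ℝ) * ((n : ℝ) * M) := by
    intro t
    rw [hL]
    calc ∑ i, ∑ j, k (‖y t i - y t j‖ ^ 2 / (2 * h ^ 2))
        ≤ ∑ _i : Fin n, ∑ _j : Fin n, M :=
          Finset.sum_le_sum fun i _ => Finset.sum_le_sum fun j _ =>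
            (abs_le.mp (hM _ (by rw [Set.mem_Ici]; positivity))).2
      _ = (n : ℝ) * ((n : ℝ) * M) := by
          simp [Finset.sum_const, Finset.card_univ, nsmul_eq_mul]
          try ring
  refine ⟨step, hmonoL, ⟨⨆ t, L (y t), tendsto_atTop_ciSup hmonoL ⟨(n : ℝ) * ((n : ℝ) * M), ?_⟩⟩, ?_⟩
  · rintro _ ⟨t, rfl⟩
    exact hbound t
  · intro t heq
    have h1 := step t
    rw [heq, sub_self] at h1
    have hc : 0 < 2 * g 0 / h ^ 2 := by positivity
    have hnn : 0 ≤ ∑ i, ‖y (t + 1) i - y t i‖ ^ 2 :=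
      Finset.sum_nonneg fun i _ => sq_nonneg _
    have hsum0 : ∑ i, ‖y (t + 1) i - y t i‖ ^ 2 = 0 := by
      nlinarith
    have hz := (Finset.sum_eq_zero_iff_of_nonneg (fun i _ => sq_nonneg _)).mp hsum0
    funext i
    have hi := hz i (Finset.mem_univ i)
    have : y (t + 1) i - y t i = 0 :=
      norm_eq_zero.mp ((pow_eq_zero_iff two_ne_zero).mp hi)
    exact sub_eq_zero.mp this
end

section
/- Geometrical characterization of BMS fixed points: let G(u)=g(‖u‖²/2) with g:[0,∞)→[0,∞) non-increasing and g(0)>0, h>0, and u₁,…,uₙ ∈ ℝ^d. Then ∑_{j=1}^n (u_i − u_j) G((u_i − u_j)/h) = 0 for all i ∈ [n] if and only if for every pair (i,j), either u_i = u_j or G((u_i − u_j)/h) = 0. -/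
open scoped RealInnerProductSpace


theorem stmt_14 {d n : ℕ} (g : ℝ → ℝ) (hgnonneg : ∀ u : ℝ, 0 ≤ u → 0 ≤ g u)
    (hgmono : AntitoneOn g (Set.Ici 0)) (hg0 : 0 < g 0)
    (h : ℝ) (hh : 0 < h) (u : Fin n → EuclideanSpace ℝ (Fin d)) :
    (∀ i, ∑ j, g (‖u i - u j‖ ^ 2 / (2 * h ^ 2)) • (u i - u j) = 0) ↔
      ∀ i j, u i = u j ∨ g (‖u i - u j‖ ^ 2 / (2 * h ^ 2)) = 0 := by
  set G : Fin n → Fin n → ℝ := fun i j => g (‖u i - u j‖ ^ 2 / (2 * h ^ 2)) with hG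
  have hGnn : ∀ i j, 0 ≤ G i j := by
    intro i j
    exact hgnonneg _ (div_nonneg (sq_nonneg _) (by positivity))
  have hGsymm : ∀ i j, G i j = G j i := by
    intro i j
    simp only [hG, norm_sub_rev]
  constructor
  · intro heq
    -- main lemma: if all larger-norm neighbors have G = 0, then neighbors coincide
    have main : ∀ i : Fin n, (∀ j, ‖u i‖ < ‖u j‖ → G i j = 0) →
        ∀ j, G i j ≠ 0 → u i = u j := by
      intro i hbig j hGij
      have hsum : ∑ k, G i k * (inner ℝ (u i - u k) (u i) : ℝ) = 0 := by
        have := heq i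
        have h2 : (inner ℝ (∑ k, G i k • (u i - u k)) (u i) : ℝ) = 0 := by rw [this]; simp
        rw [sum_inner] at h2
        simp only [real_inner_smul_left] at h2
        exact h2
      have hterm_nn : ∀ k ∈ Finset.univ, 0 ≤ G i k * (inner ℝ (u i - u k) (u i) : ℝ) := by
        intro k _
        by_cases hk : ‖u i‖ < ‖u k‖
        · rw [hbig k hk]; simp
        · push_neg at hk
          apply mul_nonneg (hGnn i k)
          have h1 : (inner ℝ (u i - u k) (u i) : ℝ) = ‖u i‖ ^ 2 - (inner ℝ (u k) (u i) : ℝ) := by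
            rw [inner_sub_left, real_inner_self_eq_norm_sq]
          rw [h1]
          have h2 : (inner ℝ (u k) (u i) : ℝ) ≤ ‖u k‖ * ‖u i‖ := real_inner_le_norm _ _
          nlinarith [norm_nonneg (u i)]
      have hzero : ∀ k ∈ Finset.univ, G i k * (inner ℝ (u i - u k) (u i) : ℝ) = 0 :=
        (Finset.sum_eq_zero_iff_of_nonneg hterm_nn).mp hsum
      have hj := hzero j (Finset.mem_univ j)
      have hinner : (inner ℝ (u i - u j) (u i) : ℝ) = 0 := by
        rcases mul_eq_zero.mp hj with h' | h'
        · exact absurd h' hGij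
        · exact h'
      have hjle : ‖u j‖ ≤ ‖u i‖ := by
        by_contra hc
        push_neg at hc
        exact hGij (hbig j hc)
      have hdist : ‖u i - u j‖ ^ 2 = ‖u i‖ ^ 2 - 2 * (inner ℝ (u i) (u j) : ℝ) + ‖u j‖ ^ 2 :=
        norm_sub_sq_real _ _
      have hii : (inner ℝ (u i) (u i) : ℝ) = (inner ℝ (u j) (u i) : ℝ) := by
        have := inner_sub_left (𝕜 := ℝ) (u i) (u j) (u i)
        rw [hinner] at this
        linarith [this]
      have : ‖u i - u j‖ ^ 2 ≤ 0 := by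
        rw [hdist]
        rw [real_inner_comm (u i) (u j)] at hii
        rw [real_inner_self_eq_norm_sq] at hii
        nlinarith [sq_nonneg (‖u i‖ - ‖u j‖), norm_nonneg (u i), norm_nonneg (u j)]
      have h0 : ‖u i - u j‖ = 0 :=
        le_antisymm (by nlinarith [norm_nonneg (u i - u j)]) (norm_nonneg _)
      have := norm_eq_zero.mp h0
      exact sub_eq_zero.mp this
    -- induction on the number of points of strictly larger norm
    have key : ∀ m : ℕ, ∀ i : Fin n,
        (Finset.univ.filter (fun k => ‖u i‖ < ‖u k‖)).card ≤ m →
        ∀ j, G i j ≠ 0 → u i = u j := by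
      intro m
      induction m with
      | zero =>
        intro i hcard
        apply main
        intro j hj
        exfalso
        have : j ∈ Finset.univ.filter (fun k => ‖u i‖ < ‖u k‖) := by
          simp [hj]
        have := Finset.card_pos.mpr ⟨j, this⟩
        omega
      | succ m ih =>
        intro i hcard
        apply main
        intro j hj
        by_contra hGij
        -- j has strictly larger norm; its filter set is strictly smaller
        have hss : Finset.univ.filter (fun k => ‖u j‖ < ‖u k‖) ⊂
            Finset.univ.filter (fun k => ‖u i‖ < ‖u k‖) := by
          constructor
          · intro k hk
            simp only [Finset.mem_filter, Finset.mem_univ, true_and] at hk ⊢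
            linarith
          · intro hsub
            have : j ∈ Finset.univ.filter (fun k => ‖u i‖ < ‖u k‖) := by simp [hj]
            have := hsub this
            simp at this
        have hcj : (Finset.univ.filter (fun k => ‖u j‖ < ‖u k‖)).card ≤ m := by
          have := Finset.card_lt_card hss
          omega
        have := ih j hcj i (by rw [← hGsymm]; exact hGij)
        rw [this] at hj
        exact lt_irrefl _ hj
    intro i j
    by_cases hGij : G i j = 0
    · exact Or.inr hGij
    · exact Or.inl (key _ i le_rfl j hGij)
  · intro hpair i
    apply Finset.sum_eq_zero
    intro j _
    rcases hpair i j with heq | hzero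
    · rw [heq, sub_self, smul_zero]
    · rw [hzero, zero_smul]
end

section
/- If an extreme point exists with an effective neighbor, the gradient condition fails: let u₁,…,uₙ ∈ ℝ^d, G as above (nonnegative, radial, non-increasing profile), and suppose u_i is an exposed point of the convex hull of {u₁,…,uₙ} with supporting hyperplane normal q (so qᵀu_j > qᵀu_i for all j with u_j ≠ u_i), and there exists k with u_k ≠ u_i and G((u_i−u_k)/h) > 0. Then qᵀ(∑_{j=1}^n (u_i − u_j)G((u_i−u_j)/h)) < 0; in particular ∑_j (u_i−u_j)G((u_i−u_j)/h) ≠ 0. -/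
theorem stmt_15 {d n : ℕ} (g : ℝ → ℝ) (hgnonneg : ∀ u : ℝ, 0 ≤ u → 0 ≤ g u)
    (hgmono : AntitoneOn g (Set.Ici 0))
    (h : ℝ) (hh : 0 < h) (u : Fin n → EuclideanSpace ℝ (Fin d))
    (i : Fin n) (q : EuclideanSpace ℝ (Fin d)) (hq : q ≠ 0)
    (hexp : ∀ j, u j ≠ u i → (inner ℝ q (u i) : ℝ) < inner ℝ q (u j))
    (hk : ∃ k, u k ≠ u i ∧ 0 < g (‖u i - u k‖ ^ 2 / (2 * h ^ 2))) :
    (inner ℝ q (∑ j, g (‖u i - u j‖ ^ 2 / (2 * h ^ 2)) • (u i - u j)) : ℝ) < 0 ∧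
      ∑ j, g (‖u i - u j‖ ^ 2 / (2 * h ^ 2)) • (u i - u j) ≠ 0 := by
  obtain ⟨k, hki, hgk⟩ := hk
  have hgj : ∀ j : Fin n, 0 ≤ g (‖u i - u j‖ ^ 2 / (2 * h ^ 2)) := by
    intro j
    apply hgnonneg
    positivity
  have hinner : ∀ j : Fin n, (inner ℝ q (u i - u j) : ℝ) ≤ 0 := by
    intro j
    by_cases hj : u j = u i
    · simp [hj]
    · rw [inner_sub_right]
      linarith [hexp j hj]
  have hinnerk : (inner ℝ q (u i - u k) : ℝ) < 0 := by
    rw [inner_sub_right]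
    linarith [hexp k hki]
  have key : (inner ℝ q (∑ j, g (‖u i - u j‖ ^ 2 / (2 * h ^ 2)) • (u i - u j)) : ℝ)
      = ∑ j, g (‖u i - u j‖ ^ 2 / (2 * h ^ 2)) * inner ℝ q (u i - u j) := by
    rw [inner_sum]
    exact Finset.sum_congr rfl fun j _ => real_inner_smul_right q _ _
  have hlt : (inner ℝ q (∑ j, g (‖u i - u j‖ ^ 2 / (2 * h ^ 2)) • (u i - u j)) : ℝ) < 0 := by
    rw [key]
    have := Finset.sum_lt_sum (f := fun j : Fin n =>
        g (‖u i - u j‖ ^ 2 / (2 * h ^ 2)) * inner ℝ q (u i - u j)) (g := fun _ => (0 : ℝ))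
        (fun j _ => mul_nonpos_of_nonneg_of_nonpos (hgj j) (hinner j))
        ⟨k, Finset.mem_univ k, mul_neg_of_pos_of_neg hgk hinnerk⟩
    simpa using this
  refine ⟨hlt, fun hzero => ?_⟩
  rw [hzero] at hlt
  simp at hlt
end

section
/- Minimum distance between overlapping convex hulls: let P₁, P₂ be nonempty finite sets of points in ℝ^d with diameters L₁ = max_{u,v∈P₁}‖u−v‖ and L₂ = max_{u,v∈P₂}‖u−v‖, and suppose conv(P₁) ∩ conv(P₂) ≠ ∅. If L₁ = L₂ = 0 then min_{u∈P₁, v∈P₂}‖u−v‖ = 0; otherwise min_{u∈P₁, v∈P₂}‖u−v‖ < √((L₁² + L₂²)/2). -/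
open scoped RealInnerProductSpace BigOperators

section Aux

variable {E : Type*} [NormedAddCommGroup E] [InnerProductSpace ℝ E]

private lemma exists_pos_weight {α : Type*} (s : Finset α) (w : α → ℝ)
    (hw : ∀ i ∈ s, 0 ≤ w i) (h1 : ∑ i ∈ s, w i = 1) : ∃ i ∈ s, 0 < w i := by
  by_contra hc
  push_neg at hc
  have : ∑ i ∈ s, w i = 0 :=
    Finset.sum_eq_zero fun i hi => le_antisymm (hc i hi) (hw i hi)
  linarith

private lemma exists_le_weighted {α : Type*} (s : Finset α) (w f : α → ℝ)
    (hw : ∀ i ∈ s, 0 ≤ w i) (h1 : ∑ i ∈ s, w i = 1) :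
    ∃ i ∈ s, f i ≤ ∑ i ∈ s, w i * f i := by
  by_contra h
  push_neg at h
  obtain ⟨i0, hi0, hwi0⟩ := exists_pos_weight s w hw h1
  have hlt : ∑ i ∈ s, w i * (∑ j ∈ s, w j * f j) < ∑ i ∈ s, w i * f i := by
    refine Finset.sum_lt_sum (fun i hi => mul_le_mul_of_nonneg_left (h i hi).le (hw i hi))
      ⟨i0, hi0, mul_lt_mul_of_pos_left (h i0 hi0) hwi0⟩
  rw [← Finset.sum_mul, h1, one_mul] at hlt
  exact lt_irrefl _ hlt

private lemma zero_sum {P : Finset E} {w : E → ℝ} {x : E}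
    (hw1 : ∑ p ∈ P, w p = 1) (hx : ∑ p ∈ P, w p • p = x) :
    ∑ p ∈ P, w p • (p - x) = 0 := by
  simp only [smul_sub, Finset.sum_sub_distrib, hx, ← Finset.sum_smul, hw1, one_smul, sub_self]

private lemma moment_eq {Q : Finset E} {w' : E → ℝ} {x : E}
    (hw'1 : ∑ q ∈ Q, w' q = 1) (hz : ∑ q ∈ Q, w' q • (q - x) = 0) (p : E) :
    ∑ q ∈ Q, w' q * ‖p - q‖ ^ 2 = ‖p - x‖ ^ 2 + ∑ q ∈ Q, w' q * ‖q - x‖ ^ 2 := by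
  have key : ∀ q : E, ‖p - q‖ ^ 2 =
      ‖p - x‖ ^ 2 + ‖q - x‖ ^ 2 - 2 * ⟪p - x, q - x⟫ := by
    intro q
    have h := norm_sub_sq_real (p - x) (q - x)
    rw [sub_sub_sub_cancel_right] at h
    rw [h]; ring
  have hin : ∑ q ∈ Q, w' q * ⟪p - x, q - x⟫ = 0 := by
    have : ∑ q ∈ Q, w' q * ⟪p - x, q - x⟫ = ⟪p - x, ∑ q ∈ Q, w' q • (q - x)⟫ := by
      rw [inner_sum]
      exact Finset.sum_congr rfl fun q _ => (real_inner_smul_right _ _ _).symm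
    rw [this, hz, inner_zero_right]
  calc ∑ q ∈ Q, w' q * ‖p - q‖ ^ 2
      = ∑ q ∈ Q, (w' q * ‖p - x‖ ^ 2 + w' q * ‖q - x‖ ^ 2
          - 2 * (w' q * ⟪p - x, q - x⟫)) := by
        refine Finset.sum_congr rfl fun q _ => ?_
        rw [key q]; ring
    _ = ‖p - x‖ ^ 2 + ∑ q ∈ Q, w' q * ‖q - x‖ ^ 2 := by
        rw [Finset.sum_sub_distrib, Finset.sum_add_distrib, ← Finset.sum_mul, hw'1,
          ← Finset.mul_sum, hin]
        ring

/-- variance bound: ∑ w p ‖p-x‖² ≤ L²/2 (1 - ∑ w p²). -/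
private lemma var_bound {P : Finset E} {w : E → ℝ} {x : E} {L : ℝ}
    (hw : ∀ p ∈ P, 0 ≤ w p) (hw1 : ∑ p ∈ P, w p = 1)
    (hx : ∑ p ∈ P, w p • p = x)
    (hdiam : ∀ u ∈ P, ∀ v ∈ P, ‖u - v‖ ≤ L) :
    ∑ p ∈ P, w p * ‖p - x‖ ^ 2 ≤ L ^ 2 / 2 * (1 - ∑ p ∈ P, (w p) ^ 2) := by
  classical
  have hz := zero_sum hw1 hx
  set A := ∑ p ∈ P, w p * ‖p - x‖ ^ 2 with hA
  have hdouble : ∑ p ∈ P, w p * (∑ q ∈ P, w q * ‖p - q‖ ^ 2) = 2 * A := by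
    calc ∑ p ∈ P, w p * (∑ q ∈ P, w q * ‖p - q‖ ^ 2)
        = ∑ p ∈ P, (w p * ‖p - x‖ ^ 2 + w p * A) := by
          refine Finset.sum_congr rfl fun p _ => ?_
          rw [moment_eq hw1 hz p]; ring
      _ = 2 * A := by
          rw [Finset.sum_add_distrib, ← Finset.sum_mul, hw1]; ring
  have hub : ∑ p ∈ P, w p * (∑ q ∈ P, w q * ‖p - q‖ ^ 2)
      ≤ L ^ 2 * (1 - ∑ p ∈ P, (w p) ^ 2) := by
    have hinner : ∀ p ∈ P, ∑ q ∈ P, w q * ‖p - q‖ ^ 2 ≤ L ^ 2 - w p * L ^ 2 := by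
      intro p hp
      have step : ∀ q ∈ P, w q * ‖p - q‖ ^ 2
          ≤ w q * L ^ 2 - (if q = p then w q * L ^ 2 else 0) := by
        intro q hq
        split_ifs with hqp
        · subst hqp; simp
        · have h1 : ‖p - q‖ ≤ L := hdiam p hp q hq
          have h2 : ‖p - q‖ ^ 2 ≤ L ^ 2 := by
            nlinarith [norm_nonneg (p - q)]
          have := mul_le_mul_of_nonneg_left h2 (hw q hq)
          linarith
      calc ∑ q ∈ P, w q * ‖p - q‖ ^ 2
          ≤ ∑ q ∈ P, (w q * L ^ 2 - (if q = p then w q * L ^ 2 else 0)) :=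
            Finset.sum_le_sum step
        _ = L ^ 2 - w p * L ^ 2 := by
            rw [Finset.sum_sub_distrib, ← Finset.sum_mul, hw1, Finset.sum_ite_eq' P p
              (fun q => w q * L ^ 2), if_pos hp]
            ring
    calc ∑ p ∈ P, w p * (∑ q ∈ P, w q * ‖p - q‖ ^ 2)
        ≤ ∑ p ∈ P, w p * (L ^ 2 - w p * L ^ 2) :=
          Finset.sum_le_sum fun p hp =>
            mul_le_mul_of_nonneg_left (hinner p hp) (hw p hp)
      _ = L ^ 2 * (1 - ∑ p ∈ P, (w p) ^ 2) := by
          have hrw : ∀ p : E, w p * (L ^ 2 - w p * L ^ 2)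
              = w p * L ^ 2 - (w p) ^ 2 * L ^ 2 := fun p => by ring
          simp only [hrw]
          rw [Finset.sum_sub_distrib, ← Finset.sum_mul, ← Finset.sum_mul, hw1]
          ring
  linarith

end Aux

theorem stmt_16 {d : ℕ} (P₁ P₂ : Finset (EuclideanSpace ℝ (Fin d)))
    (h₁ : P₁.Nonempty) (h₂ : P₂.Nonempty) (L₁ L₂ : ℝ)
    (hL₁ : (∀ u ∈ P₁, ∀ v ∈ P₁, ‖u - v‖ ≤ L₁) ∧ ∃ u ∈ P₁, ∃ v ∈ P₁, ‖u - v‖ = L₁)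
    (hL₂ : (∀ u ∈ P₂, ∀ v ∈ P₂, ‖u - v‖ ≤ L₂) ∧ ∃ u ∈ P₂, ∃ v ∈ P₂, ‖u - v‖ = L₂)
    (hcap : (convexHull ℝ (P₁ : Set (EuclideanSpace ℝ (Fin d))) ∩
        convexHull ℝ (P₂ : Set (EuclideanSpace ℝ (Fin d)))).Nonempty) :
    (L₁ = 0 ∧ L₂ = 0 → ∃ u ∈ P₁, ∃ v ∈ P₂, ‖u - v‖ = 0) ∧
      (¬(L₁ = 0 ∧ L₂ = 0) →
        ∃ u ∈ P₁, ∃ v ∈ P₂, ‖u - v‖ < Real.sqrt ((L₁ ^ 2 + L₂ ^ 2) / 2)) := by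
  obtain ⟨x, hx₁, hx₂⟩ := hcap
  rw [Finset.mem_convexHull'] at hx₁ hx₂
  obtain ⟨w, hw0, hw1, hwx⟩ := hx₁
  obtain ⟨w', hw'0, hw'1, hw'x⟩ := hx₂
  set a := ∑ p ∈ P₁, w p * ‖p - x‖ ^ 2 with ha_def
  set b := ∑ q ∈ P₂, w' q * ‖q - x‖ ^ 2 with hb_def
  have hz' : ∑ q ∈ P₂, w' q • (q - x) = 0 := zero_sum hw'1 hw'x
  have hcross : ∑ p ∈ P₁, w p * (∑ q ∈ P₂, w' q * ‖p - q‖ ^ 2) = a + b := by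
    calc ∑ p ∈ P₁, w p * (∑ q ∈ P₂, w' q * ‖p - q‖ ^ 2)
        = ∑ p ∈ P₁, (w p * ‖p - x‖ ^ 2 + w p * b) := by
          refine Finset.sum_congr rfl fun p _ => ?_
          rw [moment_eq hw'1 hz' p]; ring
      _ = a + b := by rw [Finset.sum_add_distrib, ← Finset.sum_mul, hw1]; ring
  obtain ⟨u, hu, hub⟩ :=
    exists_le_weighted P₁ w (fun p => ∑ q ∈ P₂, w' q * ‖p - q‖ ^ 2) hw0 hw1
  obtain ⟨v, hv, hvb⟩ := exists_le_weighted P₂ w' (fun q => ‖u - q‖ ^ 2) hw'0 hw'1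
  have hmain : ‖u - v‖ ^ 2 ≤ a + b := by
    calc ‖u - v‖ ^ 2 ≤ ∑ q ∈ P₂, w' q * ‖u - q‖ ^ 2 := hvb
      _ ≤ ∑ p ∈ P₁, w p * (∑ q ∈ P₂, w' q * ‖p - q‖ ^ 2) := hub
      _ = a + b := hcross
  have haL : a ≤ L₁ ^ 2 / 2 * (1 - ∑ p ∈ P₁, (w p) ^ 2) :=
    var_bound hw0 hw1 hwx hL₁.1
  have hbL : b ≤ L₂ ^ 2 / 2 * (1 - ∑ q ∈ P₂, (w' q) ^ 2) :=
    var_bound hw'0 hw'1 hw'x hL₂.1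
  have hS₁ : 0 < ∑ p ∈ P₁, (w p) ^ 2 := by
    obtain ⟨p, hp, hwp⟩ := exists_pos_weight P₁ w hw0 hw1
    have h1 : (w p) ^ 2 ≤ ∑ p ∈ P₁, (w p) ^ 2 :=
      Finset.single_le_sum (f := fun p => (w p) ^ 2) (fun i _ => sq_nonneg _) hp
    nlinarith
  have hS₂ : 0 < ∑ q ∈ P₂, (w' q) ^ 2 := by
    obtain ⟨q, hq, hwq⟩ := exists_pos_weight P₂ w' hw'0 hw'1
    have h1 : (w' q) ^ 2 ≤ ∑ q ∈ P₂, (w' q) ^ 2 :=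
      Finset.single_le_sum (f := fun q => (w' q) ^ 2) (fun i _ => sq_nonneg _) hq
    nlinarith
  have hL₁0 : 0 ≤ L₁ := by
    obtain ⟨u', _, v', _, h⟩ := hL₁.2
    rw [← h]; exact norm_nonneg _
  have hL₂0 : 0 ≤ L₂ := by
    obtain ⟨u', _, v', _, h⟩ := hL₂.2
    rw [← h]; exact norm_nonneg _
  constructor
  · rintro ⟨e1, e2⟩
    refine ⟨u, hu, v, hv, ?_⟩
    rw [e1] at haL
    rw [e2] at hbL
    norm_num at haL hbL
    have hsq : ‖u - v‖ ^ 2 ≤ 0 := by linarith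
    exact le_antisymm (by nlinarith [norm_nonneg (u - v)]) (norm_nonneg _)
  · intro hne
    refine ⟨u, hu, v, hv, ?_⟩
    have hstrict : ‖u - v‖ ^ 2 < (L₁ ^ 2 + L₂ ^ 2) / 2 := by
      set S₁ := ∑ p ∈ P₁, (w p) ^ 2 with hS₁def
      set S₂ := ∑ q ∈ P₂, (w' q) ^ 2 with hS₂def
      have key1 : L₁ ^ 2 * S₁ ≥ 0 := mul_nonneg (sq_nonneg _) hS₁.le
      have key2 : L₂ ^ 2 * S₂ ≥ 0 := mul_nonneg (sq_nonneg _) hS₂.le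
      rcases not_and_or.mp hne with h | h
      · have hL₁pos : 0 < L₁ := lt_of_le_of_ne hL₁0 (Ne.symm h)
        have key1' : 0 < L₁ ^ 2 * S₁ := mul_pos (pow_pos hL₁pos 2) hS₁
        have e1' : L₁ ^ 2 / 2 * (1 - S₁) = L₁ ^ 2 / 2 - L₁ ^ 2 * S₁ / 2 := by ring
        have e2' : L₂ ^ 2 / 2 * (1 - S₂) = L₂ ^ 2 / 2 - L₂ ^ 2 * S₂ / 2 := by ring
        linarith [hmain, haL, hbL]
      · have hL₂pos : 0 < L₂ := lt_of_le_of_ne hL₂0 (Ne.symm h)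
        have key2' : 0 < L₂ ^ 2 * S₂ := mul_pos (pow_pos hL₂pos 2) hS₂
        have e1' : L₁ ^ 2 / 2 * (1 - S₁) = L₁ ^ 2 / 2 - L₁ ^ 2 * S₁ / 2 := by ring
        have e2' : L₂ ^ 2 / 2 * (1 - S₂) = L₂ ^ 2 / 2 - L₂ ^ 2 * S₂ / 2 := by ring
        linarith [hmain, haL, hbL]
    exact (Real.lt_sqrt (norm_nonneg _)).mpr hstrict
end

section
/- Regular-simplex BMS recursion and cubic contraction: let n ≥ 2 points y_{t,1},…,y_{t,n} ∈ ℝ^d (n ≤ d+1) be the vertices of a regular (n−1)-simplex centered at the origin with ‖y_{t,i}‖ = r_t/√n for each i, so ∑_i y_{t,i} = 0 and ‖y_{t,i}−y_{t,j}‖² = 2r_t²/(n−1) for i ≠ j. Then the BMS update with weights G_{ij} = g(‖y_{t,i}−y_{t,j}‖²/(2h²)) satisfies y_{t+1,i} = c_t · y_{t,i} where c_t = (g(0) − g(r_t²/((n−1)h²)))/(g(0) + (n−1)g(r_t²/((n−1)h²))). Moreover, if g satisfies |g(u) − g(0)| ≤ c·u for u ∈ [0,v] and r_t²/((n−1)h²)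 ≤ v, then r_{t+1} = c_t r_t ≤ (c/((n−1)g(0)h²)) r_t³. -/
theorem stmt_19 {d n : ℕ} (hn : 2 ≤ n) (g : ℝ → ℝ)
    (hgnonneg : ∀ u : ℝ, 0 ≤ u → 0 ≤ g u) (hg0 : 0 < g 0)
    (h : ℝ) (hh : 0 < h) (r : ℝ) (hr : 0 < r)
    (y y' : Fin n → EuclideanSpace ℝ (Fin d))
    (hcenter : ∑ i, y i = 0)
    (hnorm : ∀ i, ‖y i‖ = r / Real.sqrt n)
    (hdist : ∀ i j, i ≠ j → ‖y i - y j‖ ^ 2 = 2 * r ^ 2 / ((n : ℝ) - 1))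
    (hupd : ∀ i, y' i = (∑ j, g (‖y i - y j‖ ^ 2 / (2 * h ^ 2)))⁻¹ •
        ∑ j, g (‖y i - y j‖ ^ 2 / (2 * h ^ 2)) • y j) :
    (∀ i, y' i = ((g 0 - g (r ^ 2 / (((n : ℝ) - 1) * h ^ 2))) /
        (g 0 + ((n : ℝ) - 1) * g (r ^ 2 / (((n : ℝ) - 1) * h ^ 2)))) • y i) ∧
      ∀ cst v : ℝ, 0 < cst → 0 < v →
        (∀ u ∈ Set.Icc (0:ℝ) v, |g u - g 0| ≤ cst * u) →
        r ^ 2 / (((n : ℝ) - 1) * h ^ 2) ≤ v →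
        (g 0 - g (r ^ 2 / (((n : ℝ) - 1) * h ^ 2))) /
            (g 0 + ((n : ℝ) - 1) * g (r ^ 2 / (((n : ℝ) - 1) * h ^ 2))) * r
          ≤ cst / (((n : ℝ) - 1) * g 0 * h ^ 2) * r ^ 3 := by
  have hn1 : (1:ℝ) ≤ (n : ℝ) - 1 := by
    have : (2:ℝ) ≤ n := by exact_mod_cast hn
    linarith
  have hn1pos : (0:ℝ) < (n : ℝ) - 1 := by linarith
  set u : ℝ := r ^ 2 / (((n : ℝ) - 1) * h ^ 2) with hu
  have hupos : 0 < u := by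
    apply div_pos (by positivity) (by positivity)
  have hgu : 0 ≤ g u := hgnonneg u hupos.le
  have hdenom : 0 < g 0 + ((n : ℝ) - 1) * g u := by
    have : 0 ≤ ((n : ℝ) - 1) * g u := mul_nonneg hn1pos.le hgu
    linarith
  have hcard : ∀ i : Fin n, ((Finset.univ.erase i).card : ℝ) = (n : ℝ) - 1 := by
    intro i
    rw [Finset.card_erase_of_mem (Finset.mem_univ i)]
    simp [Finset.card_univ]
    have : 1 ≤ n := by omega
    push_cast [Nat.cast_sub this]
    ring
  constructor
  · intro i
    have hw : ∀ j : Fin n, g (‖y i - y j‖ ^ 2 / (2 * h ^ 2)) =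
        if j = i then g 0 else g u := by
      intro j
      by_cases hji : j = i
      · simp [hji]
      · have hd := hdist i j (fun e => hji e.symm)
        rw [hd]
        have : 2 * r ^ 2 / ((n : ℝ) - 1) / (2 * h ^ 2) = u := by
          field_simp [hu]
          rw [hu]; field_simp
        rw [this]
        simp [hji]
    have hsum1 : ∑ j, g (‖y i - y j‖ ^ 2 / (2 * h ^ 2)) =
        g 0 + ((n : ℝ) - 1) * g u := by
      simp only [hw]
      rw [← Finset.add_sum_erase _ (fun j => if j = i then g 0 else g u)
        (Finset.mem_univ i), if_pos rfl,
        Finset.sum_ite_of_false (fun j hj => Finset.ne_of_mem_erase hj),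
        Finset.sum_const, nsmul_eq_mul, hcard]
    have herase : ∑ j ∈ Finset.univ.erase i, y j = -y i := by
      have := Finset.add_sum_erase _ y (Finset.mem_univ i)
      rw [hcenter] at this
      exact eq_neg_of_add_eq_zero_right this
    have hsum2 : ∑ j, g (‖y i - y j‖ ^ 2 / (2 * h ^ 2)) • y j =
        (g 0 - g u) • y i := by
      simp only [hw]
      rw [← Finset.add_sum_erase _ (fun j => (if j = i then g 0 else g u) • y j)
        (Finset.mem_univ i), if_pos rfl]
      have : ∑ j ∈ Finset.univ.erase i, (if j = i then g 0 else g u) • y j =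
          g u • ∑ j ∈ Finset.univ.erase i, y j := by
        rw [Finset.smul_sum]
        apply Finset.sum_congr rfl
        intro j hj
        rw [if_neg (Finset.ne_of_mem_erase hj)]
      rw [this, herase, smul_neg, sub_smul, sub_eq_add_neg]
    rw [hupd i, hsum1, hsum2, smul_smul, div_eq_inv_mul]
  · intro cst v hcst hv hlip hub
    have hkey : (g 0 - g u) / (g 0 + ((n : ℝ) - 1) * g u) ≤ cst * u / g 0 := by
      apply div_le_div₀ (by positivity)
      · calc g 0 - g u ≤ |g u - g 0| := by
              rw [abs_sub_comm]; exact le_abs_self _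
          _ ≤ cst * u := hlip u ⟨hupos.le, hub⟩
      · exact hg0
      · nlinarith [mul_nonneg hn1pos.le hgu]
    calc (g 0 - g u) / (g 0 + ((n : ℝ) - 1) * g u) * r
        ≤ cst * u / g 0 * r := by
          exact mul_le_mul_of_nonneg_right hkey hr.le
      _ = cst / (((n : ℝ) - 1) * g 0 * h ^ 2) * r ^ 3 := by
          rw [hu]; field_simp
end
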